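/- arXiv:1102.0865 — 2 statements merged into one kernel-verified Lean document; each statement's English description precedes it below -/
import Mathlib

section
/- Let G be a finite group and V a finite-dimensional complex representation of G. Suppose ω and ω' are two G-invariant nondegenerate alternating bilinear forms on V. Then there exists a G-equivariant linear automorphism φ of V such that ω'(φ(x), φ(y)) = ω(x, y) for all x, y ∈ V. -/
/-!
Let `A` be the endomorphism with `ω' (A x) y = ω x y`. Since both forms are nondegenerate,
`G`-invariant and alternating, `A` is `G`-equivariant, invertible and self-adjoint for `ω'`.
Over `ℂ` an invertible endomorphism has a square root `φ = p(A)` that is a polynomial in `A`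
(interpolate square roots at the eigenvalues, then refine by Newton's method modulo the minimal
polynomial). Being a polynomial in `A`, `φ` is again equivariant and `ω'`-self-adjoint, so
`ω' (φ x) (φ y) = ω' (φ² x) y = ω' (A x) y = ω x y`.
-/

open Polynomial

namespace Polynomial

variable {K : Type*} [Field K] [IsAlgClosed K]

theorem dvd_pow_natDegree_of_forall_isRoot {m f : K[X]} (hm : m ≠ 0)
    (h : ∀ z, m.IsRoot z → f.IsRoot z) : m ∣ f ^ m.natDegree := by
  have hprod : (m.roots.map fun z => X - C z).prod ∣ (m.roots.map fun _ => f).prod :=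
    Multiset.prod_dvd_prod_of_dvd _ _ fun z hz => dvd_iff_isRoot.mpr (h z (isRoot_of_mem_roots hz))
  rwa [Multiset.map_const', Multiset.prod_replicate, IsAlgClosed.card_roots_eq_natDegree,
    ← C_mul_dvd (leadingCoeff_ne_zero.mpr hm),
    C_leadingCoeff_mul_prod_multiset_X_sub_C IsAlgClosed.card_roots_eq_natDegree] at hprod

theorem exists_sq_eval_eq_of_isRoot {m : K[X]} (hm : m ≠ 0) :
    ∃ q : K[X], ∀ z, m.IsRoot z → q.eval z ^ 2 = z := by
  classical
  choose sqrt hsqrt using fun z : K => IsAlgClosed.exists_pow_nat_eq z two_pos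
  refine ⟨Lagrange.interpolate m.roots.toFinset id sqrt, fun z hz => ?_⟩
  have := Lagrange.eval_interpolate_at_node sqrt (Set.injOn_id _)
    (Multiset.mem_toFinset.mpr ((mem_roots hm).mpr hz))
  exact (congrArg (· ^ 2) this).trans (hsqrt z)

theorem exists_dvd_sq_sub_X (h2 : (2 : K) ≠ 0) {m : K[X]} (h0 : ¬ m.IsRoot 0) :
    ∃ p : K[X], m ∣ p ^ 2 - X := by
  have hm : m ≠ 0 := fun h => h0 (by simp [h])
  obtain ⟨q, hq⟩ := exists_sq_eval_eq_of_isRoot hm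
  have hcop : IsCoprime q m := by
    refine (isCoprime_iff_aeval_ne_zero_of_isAlgClosed K K q m).mpr fun z => ?_
    by_cases hz : m.IsRoot z
    · refine Or.inl fun hqz => h0 ?_
      rwa [← hq z hz, show q.eval z = 0 by simpa using hqz, zero_pow two_ne_zero] at hz
    · exact Or.inr hz
  -- Newton's method for `Y ^ 2 - X` over `K[X] ⧸ (m)`, starting from `q`, whose square is
  -- congruent to `X` modulo the radical of `(m)`.
  let P : (AdjoinRoot m)[X] := X ^ 2 - C (AdjoinRoot.root m)
  have hnil : IsNilpotent (aeval (AdjoinRoot.mk m q) P) := by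
    refine ⟨m.natDegree, ?_⟩
    rw [show aeval (AdjoinRoot.mk m q) P = AdjoinRoot.mk m (q ^ 2 - X) by simp [P], ← map_pow,
      AdjoinRoot.mk_eq_zero]
    exact dvd_pow_natDegree_of_forall_isRoot hm fun z hz => by simp [hq z hz]
  have hunit : IsUnit (aeval (AdjoinRoot.mk m q) (derivative P)) := by
    obtain ⟨u, v, huv⟩ := hcop
    have h2' : IsUnit (2 : AdjoinRoot m) := by
      simpa only [map_ofNat] using (IsUnit.mk0 _ h2).map (algebraMap K (AdjoinRoot m))
    have hq' : IsUnit (AdjoinRoot.mk m q) := by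
      refine IsUnit.of_mul_eq_one (AdjoinRoot.mk m u) ?_
      simpa [AdjoinRoot.mk_self, mul_comm] using congrArg (AdjoinRoot.mk m) huv
    simpa [P, one_add_one_eq_two] using h2'.mul hq'
  obtain ⟨r, -, hr⟩ := (existsUnique_nilpotent_sub_and_aeval_eq_zero hnil hunit).exists
  obtain ⟨p, rfl⟩ := AdjoinRoot.mk_surjective r
  exact ⟨p, AdjoinRoot.mk_eq_zero.mp (by simpa [P, sub_eq_zero] using hr)⟩

end Polynomial

theorem Module.End.exists_aeval_sq_eq {K V : Type*} [Field K] [IsAlgClosed K] [AddCommGroup V]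
    [Module K V] [FiniteDimensional K V] (h2 : (2 : K) ≠ 0) {f : Module.End K V}
    (hf : Function.Injective f) : ∃ p : K[X], aeval f p ^ 2 = f := by
  have h0 : ¬ (minpoly K f).IsRoot 0 :=
    ((LinearMap.not_hasEigenvalue_zero_tfae f).out 5 1).mp ((injective_iff_map_eq_zero f).mp hf)
  obtain ⟨p, hp⟩ := exists_dvd_sq_sub_X h2 h0
  refine ⟨p, ?_⟩
  simpa [sub_eq_zero] using aeval_eq_zero_of_dvd_aeval_eq_zero hp (minpoly.aeval K f)

theorem Commute.aeval_right {R A : Type*} [CommSemiring R] [Semiring A] [Algebra R A] {a b : A}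
    (h : Commute a b) (p : R[X]) : Commute a (aeval b p) := by
  rw [aeval_eq_sum_range]
  exact Commute.sum_right _ _ _ fun i _ => (h.pow_right i).smul_right _

namespace LinearMap

section AdjointPair

variable {R M N : Type*} [CommRing R] [AddCommGroup M] [Module R M] [AddCommGroup N] [Module R N]
  {B : M →ₗ[R] M →ₗ[R] N} {f : Module.End R M}

theorem IsAdjointPair.pow (h : IsAdjointPair B B f f) (n : ℕ) :
    IsAdjointPair B B ⇑(f ^ n) ⇑(f ^ n) := by
  induction n with
  | zero => exact isAdjointPair_one
  | succ n ih =>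
    have := ih.mul h
    rwa [← pow_succ, ← pow_succ'] at this

theorem IsAdjointPair.aeval (h : IsAdjointPair B B f f) (p : R[X]) :
    IsAdjointPair B B ⇑(aeval f p) ⇑(aeval f p) := by
  rw [aeval_eq_sum_range]
  refine (mem_isPairSelfAdjointSubmodule _).mp (Submodule.sum_mem _ fun i _ => ?_)
  exact Submodule.smul_mem _ _ ((mem_isPairSelfAdjointSubmodule _).mpr (h.pow i))

end AdjointPair

namespace BilinForm

variable {K V : Type*} [Field K] [AddCommGroup V] [Module K V] [FiniteDimensional K V]
  {ω ω' : LinearMap.BilinForm K V} (hω' : ω'.Nondegenerate)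

theorem isAdjointPair_symmCompOfNondegenerate (hω : ω.IsAlt) (hω'alt : ω'.IsAlt) :
    IsAdjointPair ω' ω' ⇑(ω.symmCompOfNondegenerate ω' hω')
      ⇑(ω.symmCompOfNondegenerate ω' hω') := fun x y => by
  rw [symmCompOfNondegenerate_left_apply, ← hω.neg_eq,
    ← symmCompOfNondegenerate_left_apply ω hω', hω'alt.neg_eq]

theorem injective_symmCompOfNondegenerate (hω : ω.SeparatingLeft) :
    Function.Injective (ω.symmCompOfNondegenerate ω' hω') := by
  refine (injective_iff_map_eq_zero _).mpr fun x hx => hω x fun y => ?_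
  rw [← symmCompOfNondegenerate_left_apply ω hω', hx, map_zero, LinearMap.zero_apply]

theorem commute_symmCompOfNondegenerate {g : Module.End K V} (hg : Function.Surjective g)
    (hωg : ω.IsOrthogonal g) (hω'g : ω'.IsOrthogonal g) :
    Commute g (ω.symmCompOfNondegenerate ω' hω') := by
  ext x
  refine sub_eq_zero.mp (hω'.1 _ fun y => ?_)
  obtain ⟨z, rfl⟩ := hg y
  simp [hω'g _ z, hωg x z]

end BilinForm

end LinearMap

open LinearMap.BilinForm

theorem equivariant_symplectic_forms_equivalent_general
    (G : Type*) [Group G]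
    (V : Type*) [AddCommGroup V] [Module ℂ V] [FiniteDimensional ℂ V]
    (ρ : Representation ℂ G V)
    (ω ω' : V →ₗ[ℂ] V →ₗ[ℂ] ℂ)
    (hωinv : ∀ (g : G) (x y : V), ω (ρ g x) (ρ g y) = ω x y)
    (hω'inv : ∀ (g : G) (x y : V), ω' (ρ g x) (ρ g y) = ω' x y)
    (hωalt : ∀ x : V, ω x x = 0)
    (hω'alt : ∀ x : V, ω' x x = 0)
    (hωnd : ∀ x : V, (∀ y : V, ω x y = 0) → x = 0)
    (hω'nd : ∀ x : V, (∀ y : V, ω' x y = 0) → x = 0) :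
    ∃ φ : V ≃ₗ[ℂ] V,
      (∀ (g : G) (x : V), φ (ρ g x) = ρ g (φ x)) ∧
      (∀ x y : V, ω' (φ x) (φ y) = ω x y) := by
  have hω' : Nondegenerate ω' := Nondegenerate.ofSeparatingLeft hω'nd
  set A := symmCompOfNondegenerate ω ω' hω'
  have hA : Function.Injective A := injective_symmCompOfNondegenerate hω' hωnd
  obtain ⟨p, hp⟩ := Module.End.exists_aeval_sq_eq two_ne_zero hA
  set φ := aeval A p
  have hφ : Function.Injective φ := fun x y hxy =>
    hA (by rw [← hp, sq, Module.End.mul_apply, Module.End.mul_apply, hxy])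
  refine ⟨LinearEquiv.ofInjectiveEndo φ hφ, fun g x => ?_, fun x y => ?_⟩
  · have hρ : Function.Surjective (ρ g) := fun y => ⟨ρ g⁻¹ y, by simp⟩
    exact (LinearMap.congr_fun
      ((commute_symmCompOfNondegenerate hω' hρ (hωinv g) (hω'inv g)).aeval_right p).eq x).symm
  · calc ω' (φ x) (φ y) = ω' (φ (φ x)) y :=
          ((isAdjointPair_symmCompOfNondegenerate hω' hωalt hω'alt).aeval p _ _).symm
      _ = ω x y := by rw [← Module.End.mul_apply, ← sq, hp, symmCompOfNondegenerate_left_apply]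

/-- **Equivariant linear Darboux theorem** (Lemma 1.2): if `V` is a finite-dimensional
complex representation of a finite group `G` carrying two `G`-invariant nondegenerate
alternating bilinear forms `ω` and `ω'`, then there is a `G`-equivariant linear
automorphism `φ` of `V` with `ω'(φ x, φ y) = ω (x, y)`. -/
theorem equivariant_symplectic_forms_equivalent
    (G : Type*) [Group G] [Finite G]
    (V : Type*) [AddCommGroup V] [Module ℂ V] [FiniteDimensional ℂ V]
    (ρ : Representation ℂ G V)
    (ω ω' : V →ₗ[ℂ] V →ₗ[ℂ] ℂ)
    (hωinv : ∀ (g : G) (x y : V), ω (ρ g x) (ρ g y) = ω x y)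
    (hω'inv : ∀ (g : G) (x y : V), ω' (ρ g x) (ρ g y) = ω' x y)
    (hωalt : ∀ x : V, ω x x = 0)
    (hω'alt : ∀ x : V, ω' x x = 0)
    (hωnd : ∀ x : V, (∀ y : V, ω x y = 0) → x = 0)
    (hω'nd : ∀ x : V, (∀ y : V, ω' x y = 0) → x = 0) :
    ∃ φ : V ≃ₗ[ℂ] V,
      (∀ (g : G) (x : V), φ (ρ g x) = ρ g (φ x)) ∧
      (∀ x y : V, ω' (φ x) (φ y) = ω x y) :=
  equivariant_symplectic_forms_equivalent_general G V ρ ω ω' hωinv hω'inv hωalt hω'alt hωnd hω'nd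
end

section
/- For ψ ∈ GL₂(ℂ) with matrix entries α, β, γ, δ (first row (α, β), second row (γ, δ)), let T(ψ) be the 3×3 complex matrix representing the substitution action of ψ on coefficient vectors (x, y, z) of binary quadratic forms x·a² + 2y·ab + z·b², i.e. T(ψ)·(x, y, z) is the coefficient vector of x(αa + βb)² + 2y(αa + βb)(γa + δb) + z(γa + δb)²; explicitly T(ψ) has rows (α², 2αγ, γ²), (αβ, αδ + βγ, γδ), (β², 2βδ, δ²). Then: for every φ ∈ GL₃(ℂ) preserving the quadratic form q(x, y, z) = xz − y² (i.e. q(φ(x, y, z)) = q(x, y, z) for all (x, y, z)), there exists ψ ∈ GL₂(ℂ) with T(ψ) = φ; moreover, for ψ, ψ' ∈ GL₂(ℂ), T(ψ) = T(ψ') if and only if ψ' = ψ or ψ' = −ψ. -/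
/-- The coefficient action of `ψ ∈ GL₂(ℂ)` on binary quadratic forms
`x·a² + 2y·ab + z·b²`, as a 3×3 matrix acting on `(x, y, z)`. -/
noncomputable def quadSubstMatrix (ψ : Matrix.GeneralLinearGroup (Fin 2) ℂ) :
    Matrix (Fin 3) (Fin 3) ℂ :=
  let α := (ψ : Matrix (Fin 2) (Fin 2) ℂ) 0 0
  let β := (ψ : Matrix (Fin 2) (Fin 2) ℂ) 0 1
  let γ := (ψ : Matrix (Fin 2) (Fin 2) ℂ) 1 0
  let δ := (ψ : Matrix (Fin 2) (Fin 2) ℂ) 1 1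
  !![α^2, 2*α*γ, γ^2;
     α*β, α*δ + β*γ, γ*δ;
     β^2, 2*β*δ, δ^2]

/-! The first and last columns of `φ` are isotropic for `q = xz - y²`, hence equal to
`(α², αβ, β²)` and `(γ², γδ, δ²)`, and pairing them gives `(αδ - βγ)² = 1`. The middle column is
polar-orthogonal to both; since the polar form is nondegenerate it is a multiple
`c • (2αγ, αδ + βγ, 2βδ)`, and `q` of it gives `c² = 1`, so `φ = T(α, β; cγ, cδ)`.
For uniqueness, `T` is an anti-homomorphism whose kernel is `{±1}`. -/

open Matrix

section TernaryForm

variable {R : Type*} [CommRing R]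

def ternaryForm (v : Fin 3 → R) : R := v 0 * v 2 - v 1 ^ 2

def ternaryPolar (v w : Fin 3 → R) : R := v 0 * w 2 + v 2 * w 0 - 2 * (v 1 * w 1)

lemma ternaryPolar_eq_sub (v w : Fin 3 → R) :
    ternaryPolar v w = ternaryForm (v + w) - ternaryForm v - ternaryForm w := by
  simp only [ternaryPolar, ternaryForm, Pi.add_apply]
  ring

variable {M : Matrix (Fin 3) (Fin 3) R}

lemma ternaryForm_col_of_preserves (hM : ∀ v, ternaryForm (M *ᵥ v) = ternaryForm v) (j : Fin 3) :
    ternaryForm (M.col j) = ternaryForm (Pi.single j 1) := by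
  rw [← mulVec_single_one, hM]

lemma ternaryPolar_col_of_preserves (hM : ∀ v, ternaryForm (M *ᵥ v) = ternaryForm v)
    (i j : Fin 3) :
    ternaryPolar (M.col i) (M.col j) = ternaryPolar (Pi.single i 1) (Pi.single j 1) := by
  rw [← mulVec_single_one, ← mulVec_single_one, ternaryPolar_eq_sub, ← mulVec_add, hM, hM, hM,
    ternaryPolar_eq_sub]

end TernaryForm

lemma exists_eq_sq_mul_sq {K : Type*} [Field K] [IsAlgClosed K] {x y z : K} (h : x * z = y ^ 2) :
    ∃ s t : K, x = s ^ 2 ∧ y = s * t ∧ z = t ^ 2 := by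
  obtain ⟨s, rfl⟩ := IsAlgClosed.exists_pow_nat_eq x two_pos
  rcases eq_or_ne s 0 with rfl | hs
  · obtain ⟨t, rfl⟩ := IsAlgClosed.exists_pow_nat_eq z two_pos
    exact ⟨0, t, rfl, by simpa using h.symm, rfl⟩
  · refine ⟨s, y / s, rfl, by field_simp, ?_⟩
    field_simp
    linear_combination h

lemma exists_eq_smul_of_ternaryPolar_eq_zero {R : Type*} [CommRing R] {α β γ δ u v w : R}
    (hD : (α * δ - β * γ) ^ 2 = 1)
    (h₁ : u * β ^ 2 + w * α ^ 2 - 2 * (v * (α * β)) = 0)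
    (h₂ : u * δ ^ 2 + w * γ ^ 2 - 2 * (v * (γ * δ)) = 0)
    (hq : u * w - v ^ 2 = -1) :
    ∃ c : R, c ^ 2 = 1 ∧ u = c * (2 * α * γ) ∧ v = c * (α * δ + β * γ) ∧ w = c * (2 * β * δ) := by
  -- `-½` times the polar pairing of `(u, v, w)` with `(2αγ, αδ + βγ, 2βδ)`, whose `q` is `-(αδ - βγ)²`
  set c := v * (α * δ + β * γ) - u * β * δ - w * α * γ
  have hu : u = c * (2 * α * γ) := by linear_combination (-u) * hD + γ ^ 2 * h₁ + α ^ 2 * h₂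
  have hv : v = c * (α * δ + β * γ) := by linear_combination (-v) * hD + γ * δ * h₁ + α * β * h₂
  have hw : w = c * (2 * β * δ) := by linear_combination (-w) * hD + δ ^ 2 * h₁ + β ^ 2 * h₂
  refine ⟨c, ?_, hu, hv, hw⟩
  rw [hu, hv, hw] at hq
  linear_combination -hq - c ^ 2 * hD

lemma exists_eq_quadSubst_of_preserves_ternaryForm {K : Type*} [Field K] [IsAlgClosed K]
    {M : Matrix (Fin 3) (Fin 3) K} (hM : ∀ v, ternaryForm (M *ᵥ v) = ternaryForm v) :
    ∃ α β γ δ : K, (α * δ - β * γ) ^ 2 = 1 ∧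
      M = !![α ^ 2, 2 * α * γ, γ ^ 2; α * β, α * δ + β * γ, γ * δ; β ^ 2, 2 * β * δ, δ ^ 2] := by
  have hq (j : Fin 3) := ternaryForm_col_of_preserves hM j
  have hP (i j : Fin 3) := ternaryPolar_col_of_preserves hM i j
  simp only [ternaryForm, ternaryPolar, col_apply] at hq hP
  obtain ⟨α, β, h00, h10, h20⟩ := exists_eq_sq_mul_sq (sub_eq_zero.mp (by simpa using hq 0))
  obtain ⟨γ, δ, h02, h12, h22⟩ := exists_eq_sq_mul_sq (sub_eq_zero.mp (by simpa using hq 2))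
  have hD : (α * δ - β * γ) ^ 2 = 1 := by
    have h : α ^ 2 * δ ^ 2 + β ^ 2 * γ ^ 2 - 2 * (α * β * (γ * δ)) = 1 := by
      simpa [h00, h10, h20, h02, h12, h22] using hP 0 2
    linear_combination h
  obtain ⟨c, hc, h01, h11, h21⟩ := exists_eq_smul_of_ternaryPolar_eq_zero hD
    (by simpa [h00, h10, h20] using hP 1 0) (by simpa [h02, h12, h22] using hP 1 2)
    (by simpa using hq 1)
  refine ⟨α, β, c * γ, c * δ, by linear_combination c ^ 2 * hD + hc, ?_⟩
  ext i j
  fin_cases i <;> fin_cases j <;> simp [h00, h10, h20, h01, h11, h21, h02, h12, h22] <;>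
    grind

lemma quadSubstMatrix_mul (ψ ψ' : GL (Fin 2) ℂ) :
    quadSubstMatrix (ψ * ψ') = quadSubstMatrix ψ' * quadSubstMatrix ψ := by
  ext i j
  fin_cases i <;> fin_cases j <;>
    simp [quadSubstMatrix, mul_apply, Fin.sum_univ_two, Fin.sum_univ_three] <;> ring

lemma quadSubstMatrix_one : quadSubstMatrix 1 = 1 := by
  ext i j
  fin_cases i <;> fin_cases j <;> simp [quadSubstMatrix]

lemma quadSubstMatrix_neg (ψ : GL (Fin 2) ℂ) : quadSubstMatrix (-ψ) = quadSubstMatrix ψ := by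
  simp [quadSubstMatrix]

lemma eq_one_or_eq_neg_one_of_quadSubstMatrix_eq_one {χ : GL (Fin 2) ℂ}
    (h : quadSubstMatrix χ = 1) : χ = 1 ∨ χ = -1 := by
  have e (i j : Fin 3) := congr_fun (congr_fun h i) j
  simp only [quadSubstMatrix] at e
  set A : Matrix (Fin 2) (Fin 2) ℂ := ↑χ
  have ha : A 0 0 ^ 2 = 1 := by simpa using e 0 0
  have hb : A 0 1 = 0 := by simpa using e 2 0
  have hc : A 1 0 = 0 := by simpa using e 0 2
  have had : A 0 0 * A 1 1 = 1 := by simpa [hb] using e 1 1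
  have hd : A 1 1 = A 0 0 := by linear_combination A 0 0 * had - A 1 1 * ha
  have hA : A = A 0 0 • 1 := by
    ext i j
    fin_cases i <;> fin_cases j <;> simp [hb, hc, hd]
  rcases sq_eq_one_iff.mp ha with h1 | h1
  · exact .inl (Units.ext (hA.trans (by rw [h1, one_smul, Units.val_one])))
  · exact .inr (Units.ext (hA.trans (by rw [h1, neg_one_smul, Units.val_neg, Units.val_one])))

/-- Every `φ ∈ GL₃(ℂ)` preserving the quadratic form `xz - y²` is induced by some
`ψ ∈ GL₂(ℂ)` via the substitution action on binary quadratic forms; and two elements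
of `GL₂(ℂ)` induce the same matrix iff they agree up to sign. -/
theorem quadric_automorphisms_from_GL2 :
    (∀ φ : Matrix.GeneralLinearGroup (Fin 3) ℂ,
      (∀ v : Fin 3 → ℂ,
        ((φ : Matrix (Fin 3) (Fin 3) ℂ).mulVec v 0) *
            ((φ : Matrix (Fin 3) (Fin 3) ℂ).mulVec v 2) -
          ((φ : Matrix (Fin 3) (Fin 3) ℂ).mulVec v 1) ^ 2 = v 0 * v 2 - v 1 ^ 2) →
      ∃ ψ : Matrix.GeneralLinearGroup (Fin 2) ℂ,
        quadSubstMatrix ψ = (φ : Matrix (Fin 3) (Fin 3) ℂ)) ∧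
    (∀ ψ ψ' : Matrix.GeneralLinearGroup (Fin 2) ℂ,
      quadSubstMatrix ψ = quadSubstMatrix ψ' ↔ ψ' = ψ ∨ ψ' = -ψ) := by
  refine ⟨fun φ hφ => ?_, fun ψ ψ' => ⟨fun h => ?_, ?_⟩⟩
  · obtain ⟨α, β, γ, δ, hD, hφ⟩ := exists_eq_quadSubst_of_preserves_ternaryForm hφ
    refine ⟨GeneralLinearGroup.mkOfDetNeZero !![α, β; γ, δ] ?_, ?_⟩
    · rw [det_fin_two_of]
      exact fun h => by simp [h] at hD
    · rw [hφ]
      rfl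
  · have hker : quadSubstMatrix (ψ' * ψ⁻¹) = 1 := by
      rw [quadSubstMatrix_mul, ← h, ← quadSubstMatrix_mul, mul_inv_cancel, quadSubstMatrix_one]
    rcases eq_one_or_eq_neg_one_of_quadSubstMatrix_eq_one hker with h1 | h1
    · exact .inl (mul_inv_eq_one.mp h1)
    · exact .inr (by rw [mul_inv_eq_iff_eq_mul.mp h1, neg_one_mul])
  · rintro (rfl | rfl)
    · rfl
    · exact (quadSubstMatrix_neg ψ).symm
end
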